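/- In L_excore, for pure terms u : X → P and v : X → 0, the equation u ≡ []_P ∘ v is T_excore-equivalent to tag ∘ u ≡ v. -/
import Mathlib


/-! The decorated logic for the core language for exceptions `L_excore`.
Types are elements of `Ty`, with a distinguished type `Par` of parameters and an
empty type `Emp` (written `0` in the paper); `Sig` is a signature of pure operations.
`tag : Par → Emp` is a propagator and `untag : Emp → Par` is a catcher. -/

inductive CoTm (Ty : Type) (Par Emp : Ty) (Sig : Ty → Ty → Type) : Ty → Ty → Type where
  | id (X : Ty) : CoTm Ty Par Emp Sig X X
  | comp {X Y Z : Ty} (g : CoTm Ty Par Emp Sig Y Z) (f : CoTm Ty Par Emp Sig X Y) :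
      CoTm Ty Par Emp Sig X Z
  | gen {X Y : Ty} (s : Sig X Y) : CoTm Ty Par Emp Sig X Y
  | fromEmpty (Y : Ty) : CoTm Ty Par Emp Sig Emp Y
  | tag : CoTm Ty Par Emp Sig Par Emp
  | untag : CoTm Ty Par Emp Sig Emp Par

variable {Ty : Type} {Par Emp : Ty} {Sig : Ty → Ty → Type}

/-- The pure terms of `L_excore`. -/
inductive CoPure : ∀ {X Y : Ty}, CoTm Ty Par Emp Sig X Y → Prop where
  | id (X : Ty) : CoPure (CoTm.id X)
  | comp {X Y Z : Ty} {g : CoTm Ty Par Emp Sig Y Z} {f : CoTm Ty Par Emp Sig X Y} :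
      CoPure g → CoPure f → CoPure (CoTm.comp g f)
  | gen {X Y : Ty} (s : Sig X Y) : CoPure (CoTm.gen (Par := Par) (Emp := Emp) s)
  | fromEmpty (Y : Ty) : CoPure (CoTm.fromEmpty (Par := Par) (Sig := Sig) Y)

/-- The propagators of `L_excore`: terms not containing `untag`
(all terms are catchers). -/
inductive CoPpg : ∀ {X Y : Ty}, CoTm Ty Par Emp Sig X Y → Prop where
  | id (X : Ty) : CoPpg (CoTm.id X)
  | comp {X Y Z : Ty} {g : CoTm Ty Par Emp Sig Y Z} {f : CoTm Ty Par Emp Sig X Y} :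
      CoPpg g → CoPpg f → CoPpg (CoTm.comp g f)
  | gen {X Y : Ty} (s : Sig X Y) : CoPpg (CoTm.gen (Par := Par) (Emp := Emp) s)
  | fromEmpty (Y : Ty) : CoPpg (CoTm.fromEmpty (Par := Par) (Sig := Sig) Y)
  | tag : CoPpg (CoTm.tag (Sig := Sig))

/-- A decorated equation of `L_excore`: a pair of parallel terms together with a
`Bool` which is `true` for a strong equation `≡` and `false` for a weak equation `∼`. -/
def CoEqn (Ty : Type) (Par Emp : Ty) (Sig : Ty → Ty → Type) : Type :=
  Σ X : Ty, Σ Y : Ty, (CoTm Ty Par Emp Sig X Y × CoTm Ty Par Emp Sig X Y) × Bool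

mutual
/-- Derivable strong equations of `L_excore` from the axiom set `Ax`. -/
inductive CoSEq (Ax : Set (CoEqn Ty Par Emp Sig)) :
    ∀ {X Y : Ty}, CoTm Ty Par Emp Sig X Y → CoTm Ty Par Emp Sig X Y → Prop where
  | ax {X Y : Ty} {f g : CoTm Ty Par Emp Sig X Y} :
      (⟨X, Y, (f, g), true⟩ : CoEqn Ty Par Emp Sig) ∈ Ax → CoSEq Ax f g
  | refl {X Y : Ty} (f : CoTm Ty Par Emp Sig X Y) : CoSEq Ax f f
  | symm {X Y : Ty} {f g : CoTm Ty Par Emp Sig X Y} : CoSEq Ax f g → CoSEq Ax g f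
  | trans {X Y : Ty} {f g h : CoTm Ty Par Emp Sig X Y} :
      CoSEq Ax f g → CoSEq Ax g h → CoSEq Ax f h
  | subs {X Y Z : Ty} (u : CoTm Ty Par Emp Sig X Y) {v₁ v₂ : CoTm Ty Par Emp Sig Y Z} :
      CoSEq Ax v₁ v₂ → CoSEq Ax (v₁.comp u) (v₂.comp u)
  | repl {X Y Z : Ty} {v₁ v₂ : CoTm Ty Par Emp Sig X Y} (w : CoTm Ty Par Emp Sig Y Z) :
      CoSEq Ax v₁ v₂ → CoSEq Ax (w.comp v₁) (w.comp v₂)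
  | idLeft {X Y : Ty} (f : CoTm Ty Par Emp Sig X Y) : CoSEq Ax ((CoTm.id Y).comp f) f
  | idRight {X Y : Ty} (f : CoTm Ty Par Emp Sig X Y) : CoSEq Ax (f.comp (CoTm.id X)) f
  | assoc {W X Y Z : Ty} (h : CoTm Ty Par Emp Sig Y Z) (g : CoTm Ty Par Emp Sig X Y)
      (f : CoTm Ty Par Emp Sig W X) : CoSEq Ax ((h.comp g).comp f) (h.comp (g.comp f))
  -- (initial) of the pure sublogic `L_eqn`:
  | initialPure {Y : Ty} {u : CoTm Ty Par Emp Sig Emp Y} :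
      CoPure u → CoSEq Ax u (CoTm.fromEmpty Y)
  -- (eq₁): a weak equation between propagators is strong
  | eq₁ {X Y : Ty} {f g : CoTm Ty Par Emp Sig X Y} :
      CoPpg f → CoPpg g → CoWEq Ax f g → CoSEq Ax f g
  -- (eq₂)
  | eq₂ {X Y : Ty} {f g : CoTm Ty Par Emp Sig X Y} :
      CoWEq Ax f g → CoSEq Ax (f.comp (CoTm.fromEmpty X)) (g.comp (CoTm.fromEmpty X)) →
      CoSEq Ax f g
  -- (eq₃)
  | eq₃ {X : Ty} {f g : CoTm Ty Par Emp Sig Emp X} :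
      CoWEq Ax (f.comp CoTm.tag) (g.comp CoTm.tag) → CoSEq Ax f g

/-- Derivable weak equations of `L_excore` from the axiom set `Ax`. -/
inductive CoWEq (Ax : Set (CoEqn Ty Par Emp Sig)) :
    ∀ {X Y : Ty}, CoTm Ty Par Emp Sig X Y → CoTm Ty Par Emp Sig X Y → Prop where
  | ax {X Y : Ty} {f g : CoTm Ty Par Emp Sig X Y} :
      (⟨X, Y, (f, g), false⟩ : CoEqn Ty Par Emp Sig) ∈ Ax → CoWEq Ax f g
  | symm {X Y : Ty} {f g : CoTm Ty Par Emp Sig X Y} : CoWEq Ax f g → CoWEq Ax g f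
  | trans {X Y : Ty} {f g h : CoTm Ty Par Emp Sig X Y} :
      CoWEq Ax f g → CoWEq Ax g h → CoWEq Ax f h
  -- (subs_∼): substitution only by pure terms
  | subsPure {X Y Z : Ty} {u : CoTm Ty Par Emp Sig X Y} {v₁ v₂ : CoTm Ty Par Emp Sig Y Z} :
      CoPure u → CoWEq Ax v₁ v₂ → CoWEq Ax (v₁.comp u) (v₂.comp u)
  -- (repl_∼): replacement by arbitrary terms
  | repl {X Y Z : Ty} {v₁ v₂ : CoTm Ty Par Emp Sig X Y} (w : CoTm Ty Par Emp Sig Y Z) :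
      CoWEq Ax v₁ v₂ → CoWEq Ax (w.comp v₁) (w.comp v₂)
  -- (empty_∼)
  | empty {Y : Ty} (f : CoTm Ty Par Emp Sig Emp Y) : CoWEq Ax f (CoTm.fromEmpty Y)
  -- (≡-to-∼)
  | ofStrong {X Y : Ty} {f g : CoTm Ty Par Emp Sig X Y} : CoSEq Ax f g → CoWEq Ax f g
  -- (ax): untag ∘ tag ∼ id_P
  | untag_tag : CoWEq Ax ((CoTm.untag (Sig := Sig)).comp CoTm.tag) (CoTm.id Par)
end

/-- Two sets of decorated equations are `T_excore`-equivalent over `Ax` when they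
generate the same theory (same strong and weak theorems) over `Ax`. -/
def CoEquiv (Ax E₁ E₂ : Set (CoEqn Ty Par Emp Sig)) : Prop :=
  ∀ (X Y : Ty) (f g : CoTm Ty Par Emp Sig X Y),
    (CoSEq (Ax ∪ E₁) f g ↔ CoSEq (Ax ∪ E₂) f g) ∧
    (CoWEq (Ax ∪ E₁) f g ↔ CoWEq (Ax ∪ E₂) f g)

/-- `Ax` is a pure (strong) theory: all axioms are strong equations between pure terms. -/
def CoPureAx (Ax : Set (CoEqn Ty Par Emp Sig)) : Prop :=
  ∀ e ∈ Ax, CoPure e.2.2.1.1 ∧ CoPure e.2.2.1.2 ∧ e.2.2.2 = true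

theorem pure_ppg {X Y : Ty} {f : CoTm Ty Par Emp Sig X Y} (h : CoPure f) : CoPpg f := by
  induction h with
  | id X => exact .id X
  | comp _ _ ih₁ ih₂ => exact .comp ih₁ ih₂
  | gen s => exact .gen s
  | fromEmpty Y => exact .fromEmpty Y

theorem seq_mono {A B : Set (CoEqn Ty Par Emp Sig)}
    (hS : ∀ e ∈ A, e.2.2.2 = true → CoSEq B e.2.2.1.1 e.2.2.1.2)
    (hW : ∀ e ∈ A, e.2.2.2 = false → CoWEq B e.2.2.1.1 e.2.2.1.2)
    {X Y : Ty} {f g : CoTm Ty Par Emp Sig X Y} (h : CoSEq A f g) : CoSEq B f g :=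
  CoSEq.rec (Ax := A)
    (motive_1 := fun {X Y} (f g : CoTm Ty Par Emp Sig X Y) _ => CoSEq B f g)
    (motive_2 := fun {X Y} (f g : CoTm Ty Par Emp Sig X Y) _ => CoWEq B f g)
    (fun hm => hS _ hm rfl)
    (fun f => .refl f)
    (fun _ ih => .symm ih)
    (fun _ _ ih₁ ih₂ => .trans ih₁ ih₂)
    (fun {_X _Y _Z} u {_v₁ _v₂} _ ih => .subs u ih)
    (fun w _ ih => .repl w ih)
    (fun f => .idLeft f)
    (fun f => .idRight f)
    (fun h g f => .assoc h g f)
    (fun hp => .initialPure hp)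
    (fun hf hg _ ih => .eq₁ hf hg ih)
    (fun _ _ ih₁ ih₂ => .eq₂ ih₁ ih₂)
    (fun _ ih => .eq₃ ih)
    (fun hm => hW _ hm rfl)
    (fun _ ih => .symm ih)
    (fun _ _ ih₁ ih₂ => .trans ih₁ ih₂)
    (fun hu _ ih => .subsPure hu ih)
    (fun w _ ih => .repl w ih)
    (fun f => .empty f)
    (fun _ ih => .ofStrong ih)
    .untag_tag
    h

theorem weq_mono {A B : Set (CoEqn Ty Par Emp Sig)}
    (hS : ∀ e ∈ A, e.2.2.2 = true → CoSEq B e.2.2.1.1 e.2.2.1.2)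
    (hW : ∀ e ∈ A, e.2.2.2 = false → CoWEq B e.2.2.1.1 e.2.2.1.2)
    {X Y : Ty} {f g : CoTm Ty Par Emp Sig X Y} (h : CoWEq A f g) : CoWEq B f g :=
  CoWEq.rec (Ax := A)
    (motive_1 := fun {X Y} (f g : CoTm Ty Par Emp Sig X Y) _ => CoSEq B f g)
    (motive_2 := fun {X Y} (f g : CoTm Ty Par Emp Sig X Y) _ => CoWEq B f g)
    (fun hm => hS _ hm rfl)
    (fun f => .refl f)
    (fun _ ih => .symm ih)
    (fun _ _ ih₁ ih₂ => .trans ih₁ ih₂)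
    (fun {_X _Y _Z} u {_v₁ _v₂} _ ih => .subs u ih)
    (fun w _ ih => .repl w ih)
    (fun f => .idLeft f)
    (fun f => .idRight f)
    (fun h g f => .assoc h g f)
    (fun hp => .initialPure hp)
    (fun hf hg _ ih => .eq₁ hf hg ih)
    (fun _ _ ih₁ ih₂ => .eq₂ ih₁ ih₂)
    (fun _ ih => .eq₃ ih)
    (fun hm => hW _ hm rfl)
    (fun _ ih => .symm ih)
    (fun _ _ ih₁ ih₂ => .trans ih₁ ih₂)
    (fun hu _ ih => .subsPure hu ih)
    (fun w _ ih => .repl w ih)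
    (fun f => .empty f)
    (fun _ ih => .ofStrong ih)
    .untag_tag
    h

/-- `tag ∘ []_P ≡ id_0`. -/
theorem tag_fromEmpty (A : Set (CoEqn Ty Par Emp Sig)) :
    CoSEq A ((CoTm.tag (Sig := Sig)).comp (CoTm.fromEmpty Par)) (CoTm.id Emp) :=
  .eq₁ (.comp .tag (.fromEmpty _)) (.id _) (.trans (.empty _) (.symm (.empty _)))

/-- `tag` is left-cancellable on pure terms. -/
theorem tag_cancel {A : Set (CoEqn Ty Par Emp Sig)} {X : Ty}
    {u₁ u₂ : CoTm Ty Par Emp Sig X Par} (h₁ : CoPure u₁) (h₂ : CoPure u₂)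
    (h : CoSEq A (CoTm.tag.comp u₁) (CoTm.tag.comp u₂)) : CoSEq A u₁ u₂ := by
  refine .eq₁ (pure_ppg h₁) (pure_ppg h₂) ?_
  exact (CoWEq.ofStrong (CoSEq.idLeft u₁)).symm
    |>.trans ((CoWEq.subsPure h₁ CoWEq.untag_tag).symm)
    |>.trans (CoWEq.ofStrong (CoSEq.assoc _ _ _))
    |>.trans (CoWEq.repl _ (CoWEq.ofStrong h))
    |>.trans ((CoWEq.ofStrong (CoSEq.assoc _ _ _)).symm)
    |>.trans (CoWEq.subsPure h₂ CoWEq.untag_tag)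
    |>.trans (CoWEq.ofStrong (CoSEq.idLeft u₂))

/-- In `L_excore`, for pure `u : X → P` and `v : X → 0`, the equation
`u ≡ []_P ∘ v` is `T_excore`-equivalent to `tag ∘ u ≡ v`. -/
theorem coexc_pure_eq_iff_tag_eq' (Ax : Set (CoEqn Ty Par Emp Sig)) (hAx : CoPureAx Ax)
    {X : Ty} (u : CoTm Ty Par Emp Sig X Par) (v : CoTm Ty Par Emp Sig X Emp)
    (hu : CoPure u) (hv : CoPure v) :
    CoEquiv Ax
      {(⟨X, Par, (u, (CoTm.fromEmpty Par).comp v), true⟩ : CoEqn Ty Par Emp Sig)}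
      {(⟨X, Emp, (CoTm.tag.comp u, v), true⟩ : CoEqn Ty Par Emp Sig)} := by
  -- from the E₂ axiom derive the E₁ axiom
  have d₁ : CoSEq (Ax ∪ {(⟨X, Emp, (CoTm.tag.comp u, v), true⟩ : CoEqn Ty Par Emp Sig)})
      u ((CoTm.fromEmpty Par).comp v) := by
    have h : CoSEq (Ax ∪ {(⟨X, Emp, (CoTm.tag.comp u, v), true⟩ : CoEqn Ty Par Emp Sig)})
        (CoTm.tag.comp u) v := .ax (Set.mem_union_right _ rfl)
    refine tag_cancel hu (.comp (.fromEmpty _) hv) ?_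
    exact h.trans (((CoSEq.idLeft v).symm).trans
      (((CoSEq.subs v (tag_fromEmpty _)).symm).trans (CoSEq.assoc _ _ _)))
  -- from the E₁ axiom derive the E₂ axiom
  have d₂ : CoSEq (Ax ∪ {(⟨X, Par, (u, (CoTm.fromEmpty Par).comp v), true⟩ : CoEqn Ty Par Emp Sig)})
      (CoTm.tag.comp u) v := by
    have h : CoSEq (Ax ∪ {(⟨X, Par, (u, (CoTm.fromEmpty Par).comp v), true⟩ : CoEqn Ty Par Emp Sig)})
        u ((CoTm.fromEmpty Par).comp v) := .ax (Set.mem_union_right _ rfl)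
    exact (CoSEq.repl CoTm.tag h).trans (((CoSEq.assoc _ _ _).symm).trans
      ((CoSEq.subs v (tag_fromEmpty _)).trans (CoSEq.idLeft v)))
  have hS12 : ∀ e ∈ Ax ∪ {(⟨X, Par, (u, (CoTm.fromEmpty Par).comp v), true⟩ : CoEqn Ty Par Emp Sig)},
      e.2.2.2 = true → CoSEq (Ax ∪ {(⟨X, Emp, (CoTm.tag.comp u, v), true⟩ : CoEqn Ty Par Emp Sig)})
        e.2.2.1.1 e.2.2.1.2 := by
    rintro e (he | rfl) hb
    · obtain ⟨X1, Y1, ⟨f1, g1⟩, b⟩ := e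
      cases hb
      exact .ax (Or.inl he)
    · exact d₁
  have hW12 : ∀ e ∈ Ax ∪ {(⟨X, Par, (u, (CoTm.fromEmpty Par).comp v), true⟩ : CoEqn Ty Par Emp Sig)},
      e.2.2.2 = false → CoWEq (Ax ∪ {(⟨X, Emp, (CoTm.tag.comp u, v), true⟩ : CoEqn Ty Par Emp Sig)})
        e.2.2.1.1 e.2.2.1.2 := by
    rintro e (he | rfl) hb
    · obtain ⟨X1, Y1, ⟨f1, g1⟩, b⟩ := e
      cases hb
      exact .ax (Or.inl he)
    · cases hb
  have hS21 : ∀ e ∈ Ax ∪ {(⟨X, Emp, (CoTm.tag.comp u, v), true⟩ : CoEqn Ty Par Emp Sig)},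
      e.2.2.2 = true → CoSEq (Ax ∪ {(⟨X, Par, (u, (CoTm.fromEmpty Par).comp v), true⟩ : CoEqn Ty Par Emp Sig)})
        e.2.2.1.1 e.2.2.1.2 := by
    rintro e (he | rfl) hb
    · obtain ⟨X1, Y1, ⟨f1, g1⟩, b⟩ := e
      cases hb
      exact .ax (Or.inl he)
    · exact d₂
  have hW21 : ∀ e ∈ Ax ∪ {(⟨X, Emp, (CoTm.tag.comp u, v), true⟩ : CoEqn Ty Par Emp Sig)},
      e.2.2.2 = false → CoWEq (Ax ∪ {(⟨X, Par, (u, (CoTm.fromEmpty Par).comp v), true⟩ : CoEqn Ty Par Emp Sig)})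
        e.2.2.1.1 e.2.2.1.2 := by
    rintro e (he | rfl) hb
    · obtain ⟨X1, Y1, ⟨f1, g1⟩, b⟩ := e
      cases hb
      exact .ax (Or.inl he)
    · cases hb
  intro X' Y' f g
  exact ⟨⟨seq_mono hS12 hW12, seq_mono hS21 hW21⟩, ⟨weq_mono hS12 hW12, weq_mono hS21 hW21⟩⟩
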